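/- Let (W,S) be a Coxeter system, J a subset of the index set of the simple reflections, W_J the subgroup generated by {s_j : j ∈ J}, and W^J = {w ∈ W : ℓ(w s_j) > ℓ(w) for all j ∈ J}. If w ∈ W^J and s_i is a simple reflection such that w⁻¹ s_i w ∉ W_J and ℓ(s_i w) > ℓ(w), then ℓ(s_i w y) > ℓ(w y) for every y ∈ W_J. -/

import Mathlib

/-!
Induct on `y ∈ W_J`, showing that `s_i` stays off the left descent set of `w y`. If it became a
left descent of `u s_j` without being one of `u = w y'`, the exchange property would give
`s_i u = u s_j`, i.e. `w⁻¹ s_i w = y' s_j y'⁻¹ ∈ W_J`.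

The exchange property is obtained from the permutation representation of `W` on `W × {±1}` in
which `s_i` acts by `(t, ε) ↦ (s_i t s_i, -ε)` if `t = s_i` and `(s_i t s_i, ε)` otherwise: it
shows that the parity of the number of occurrences of `t` in the left inversion sequence of a
word depends only on the product of the word, and for a left descent `s_i` of `π ω` that parity
is odd, as one sees on a reduced word starting with `i`.
-/

section SignedConj

variable {G : Type*} [Group G]

theorem mul_mul_inv_eq_self_iff {t w : G} : t * w * t⁻¹ = t ↔ w = t := by
  rw [mul_inv_eq_iff_eq_mul, mul_right_inj]

theorem inv_mul_mul_eq_self_iff {t w : G} : t⁻¹ * w * t = t ↔ w = t := by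
  rw [mul_eq_right, inv_mul_eq_one, eq_comm]

variable [DecidableEq G]

def signedConj (t : G) : Equiv.Perm (G × ℤˣ) where
  toFun p := (t * p.1 * t⁻¹, if p.1 = t then -p.2 else p.2)
  invFun p := (t⁻¹ * p.1 * t, if p.1 = t then -p.2 else p.2)
  left_inv := by
    rintro ⟨w, ε⟩
    simp only [mul_mul_inv_eq_self_iff]
    split_ifs <;> simp [mul_assoc]
  right_inv := by
    rintro ⟨w, ε⟩
    simp only [inv_mul_mul_eq_self_iff]
    split_ifs <;> simp [mul_assoc]

@[simp]
theorem signedConj_apply (t w : G) (ε : ℤˣ) :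
    signedConj t (w, ε) = (t * w * t⁻¹, if w = t then -ε else ε) := rfl

end SignedConj

namespace CoxeterSystem

variable {B W : Type*} [Group W] {M : CoxeterMatrix B} (cs : CoxeterSystem M W)

local prefix:100 "s " => cs.simple
local prefix:100 "π " => cs.wordProd
local prefix:100 "lis " => cs.leftInvSeq

theorem prod_map_alternatingWord_two_mul {G : Type*} [Monoid G] (f : B → G) (i i' : B) (m : ℕ) :
    ((alternatingWord i i' (2 * m)).map f).prod = (f i * f i') ^ m := by
  induction m with
  | zero => simp [alternatingWord]
  | succ m ih =>
    rw [show 2 * (m + 1) = 2 * m + 1 + 1 by ring, alternatingWord_succ', alternatingWord_succ']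
    simp [ih, pow_succ', mul_assoc]

theorem leftInvSeq_alternatingWord_eq_append (i i' : B) :
    lis (alternatingWord i i' (2 * M i i')) =
      (List.range (M i i')).map (fun k => s i * (s i' * s i) ^ k) ++
        (List.range (M i i')).map (fun k => s i * (s i' * s i) ^ k) := by
  refine List.ext_getElem (by simp; ring) fun k hk _ => ?_
  rw [getElem_leftInvSeq_alternatingWord cs i i' _ k (by simpa using hk),
    prod_alternatingWord_eq_mul_pow, List.getElem_append, if_neg (Nat.not_even_two_mul_add_one k),
    show (2 * k + 1) / 2 = k by omega]
  simp only [List.length_map, List.length_range, List.getElem_map, List.getElem_range]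
  split_ifs with h
  · rfl
  · rw [← Nat.sub_add_cancel (not_lt.mp h), pow_add, simple_mul_simple_pow', mul_one,
      Nat.add_sub_cancel]

section SignedConjRepresentation

variable [DecidableEq W]

theorem prod_map_signedConj_apply (ω : List B) (w : W) (ε : ℤˣ) :
    (ω.map (signedConj ∘ cs.simple)).prod (w, ε) =
      (π ω * w * (π ω)⁻¹, (-1) ^ (lis ω).count (π ω * w * (π ω)⁻¹) * ε) := by
  induction ω with
  | nil => simp
  | cons i ω ih =>
    set v := π ω * w * (π ω)⁻¹
    have hv : s i * π ω * w * (s i * π ω)⁻¹ = MulAut.conj (s i) v := by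
      simp only [v, MulAut.conj_apply, mul_inv_rev, mul_assoc]
    simp only [List.map_cons, List.prod_cons, Equiv.Perm.mul_apply, Function.comp_apply, ih,
      signedConj_apply, wordProd_cons, leftInvSeq, List.count_cons, hv,
      List.count_map_of_injective _ _ (MulAut.conj (s i)).injective, beq_iff_eq]
    simp only [MulAut.conj_apply, eq_comm (a := s i), mul_mul_inv_eq_self_iff]
    split_ifs <;> simp [pow_succ]

theorem isLiftable_signedConj : M.IsLiftable (signedConj ∘ cs.simple) := by
  intro i i'
  ext ⟨w, ε⟩ : 1
  rw [← prod_map_alternatingWord_two_mul, prod_map_signedConj_apply,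
    leftInvSeq_alternatingWord_eq_append, prod_alternatingWord_eq_mul_pow]
  simp [List.count_append, ← two_mul, pow_mul]

theorem neg_one_pow_count_leftInvSeq_eq {ω ω' : List B} (h : π ω = π ω') (t : W) :
    (-1 : ℤˣ) ^ (lis ω).count t = (-1) ^ (lis ω').count t := by
  have hlift (ω : List B) : cs.lift ⟨_, cs.isLiftable_signedConj⟩ (π ω) ((π ω)⁻¹ * t * π ω, 1) =
      (t, (-1) ^ (lis ω).count t) := by
    have : cs.lift ⟨_, cs.isLiftable_signedConj⟩ (π ω) = (ω.map (signedConj ∘ cs.simple)).prod := by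
      simp [wordProd, map_list_prod, Function.comp_def]
    simp [this, prod_map_signedConj_apply, mul_assoc]
  exact (Prod.ext_iff.mp ((hlift ω).symm.trans (h ▸ hlift ω'))).2

theorem mem_leftInvSeq_of_isLeftDescent {ω : List B} {i : B} (hi : cs.IsLeftDescent (π ω) i) :
    s i ∈ lis ω := by
  obtain ⟨τ, hτ, hτprod⟩ := cs.exists_isReduced (s i * π ω)
  have hprod : π (i :: τ) = π ω := by
    rw [wordProd_cons, ← hτprod, simple_mul_simple_cancel_left]
  have hred : cs.IsReduced (i :: τ) := by
    rw [IsReduced, hprod, List.length_cons, ← hτ.eq, ← hτprod]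
    exact (cs.isLeftDescent_iff.mp hi).symm
  have hcount : (lis (i :: τ)).count (s i) = 1 :=
    List.count_eq_one_of_mem hred.nodup_leftInvSeq (by simp [leftInvSeq])
  have hsign := cs.neg_one_pow_count_leftInvSeq_eq hprod (s i)
  rw [hcount, pow_one] at hsign
  by_contra hmem
  rw [List.count_eq_zero_of_not_mem hmem, pow_zero] at hsign
  exact absurd hsign (by decide)

end SignedConjRepresentation

theorem exists_eraseIdx_of_isLeftDescent {ω : List B} {i : B} (hi : cs.IsLeftDescent (π ω) i) :
    ∃ k < ω.length, s i * π ω = π (ω.eraseIdx k) := by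
  classical
  obtain ⟨k, hk, hget⟩ := List.getElem_of_mem (cs.mem_leftInvSeq_of_isLeftDescent hi)
  refine ⟨k, by simpa using hk, ?_⟩
  rw [← cs.getD_leftInvSeq_mul_wordProd, List.getD_eq_getElem _ _ hk, hget]

theorem simple_mul_eq_mul_simple_of_isLeftDescent_mul_simple {u : W} {i j : B}
    (hu : ¬cs.IsLeftDescent u i) (h : cs.IsLeftDescent (u * s j) i) : s i * u = u * s j := by
  obtain ⟨ω, hω, rfl⟩ := cs.exists_isReduced u
  obtain ⟨k, hk, hexch⟩ := cs.exists_eraseIdx_of_isLeftDescent (ω := ω ++ [j])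
    (by rwa [wordProd_append, wordProd_singleton])
  rw [List.length_append, List.length_singleton, Nat.lt_succ_iff, le_iff_lt_or_eq] at hk
  rcases hk with hk | rfl
  · -- erasing a letter of `ω` would make `s i * π ω` shorter than `π ω`
    rw [List.eraseIdx_append_of_lt_length hk, wordProd_append, wordProd_append, wordProd_singleton,
      ← mul_assoc, mul_left_inj] at hexch
    have := cs.length_wordProd_le (ω.eraseIdx k)
    rw [← hexch, cs.not_isLeftDescent_iff.mp hu, hω.eq, List.length_eraseIdx_of_lt hk] at this
    omega
  · rw [List.eraseIdx_append_of_length_le le_rfl, Nat.sub_self, wordProd_append, wordProd_append,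
      wordProd_singleton] at hexch
    simpa [← mul_assoc] using congrArg (· * s j) hexch

theorem not_isLeftDescent_mul_of_mem_closure {J : Set B} {w : W} {i : B}
    (hi : w⁻¹ * s i * w ∉ Subgroup.closure (cs.simple '' J)) (hw : ¬cs.IsLeftDescent w i)
    {y : W} (hy : y ∈ Subgroup.closure (cs.simple '' J)) : ¬cs.IsLeftDescent (w * y) i := by
  have step {y : W} (hy : y ∈ Subgroup.closure (cs.simple '' J)) {j : B} (hj : j ∈ J)
      (hwy : ¬cs.IsLeftDescent (w * y) i) : ¬cs.IsLeftDescent (w * (y * s j)) i := by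
    intro hdesc
    rw [← mul_assoc] at hdesc
    have hcomm := cs.simple_mul_eq_mul_simple_of_isLeftDescent_mul_simple hwy hdesc
    have hconj : w⁻¹ * s i * w = y * s j * y⁻¹ := by
      rw [eq_mul_inv_of_mul_eq hcomm]
      group
    exact hi (hconj ▸ mul_mem (mul_mem hy (Subgroup.subset_closure ⟨j, hj, rfl⟩)) (inv_mem hy))
  induction hy using Subgroup.closure_induction_right with
  | one => simpa using hw
  | mul_right y hy _ hj ih =>
    obtain ⟨j, hj, rfl⟩ := hj
    exact step hy hj ih
  | mul_inv_cancel y hy _ hj ih =>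
    obtain ⟨j, hj, rfl⟩ := hj
    rw [inv_simple]
    exact step hy hj ih

end CoxeterSystem

theorem length_simple_mul_gt_of_minimal_coset_rep_general
    {B : Type*} {W : Type*} [Group W] {M : CoxeterMatrix B}
    (cs : CoxeterSystem M W) (J : Set B) (w : W)
    (i : B)
    (hi : w⁻¹ * cs.simple i * w ∉ Subgroup.closure (cs.simple '' J))
    (hlen : cs.length (cs.simple i * w) > cs.length w) :
    ∀ y ∈ Subgroup.closure (cs.simple '' J),
      cs.length (cs.simple i * w * y) > cs.length (w * y) := by
  intro y hy
  have hwy := cs.not_isLeftDescent_mul_of_mem_closure hi (lt_asymm hlen) hy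
  rw [mul_assoc, gt_iff_lt, cs.not_isLeftDescent_iff.mp hwy]
  exact Nat.lt_succ_self _

/-- Let `(W,S)` be a Coxeter system, `J` a subset of the index set of the
simple reflections, `W_J` the subgroup generated by the simple reflections indexed by `J`,
and `W^J = {w : ℓ(w s_j) > ℓ(w) for all j ∈ J}`.  If `w ∈ W^J` and `s_i` is a simple
reflection such that `w⁻¹ s_i w ∉ W_J` and `ℓ(s_i w) > ℓ(w)`, then
`ℓ(s_i w y) > ℓ(w y)` for every `y ∈ W_J`. -/
theorem length_simple_mul_gt_of_minimal_coset_rep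
    {B : Type*} {W : Type*} [Group W] {M : CoxeterMatrix B}
    (cs : CoxeterSystem M W) (J : Set B) (w : W)
    (hw : ∀ j ∈ J, cs.length (w * cs.simple j) > cs.length w)
    (i : B)
    (hi : w⁻¹ * cs.simple i * w ∉ Subgroup.closure (cs.simple '' J))
    (hlen : cs.length (cs.simple i * w) > cs.length w) :
    ∀ y ∈ Subgroup.closure (cs.simple '' J),
      cs.length (cs.simple i * w * y) > cs.length (w * y) :=
  length_simple_mul_gt_of_minimal_coset_rep_general cs J w i hi hlen
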